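/- For every integer k ≥ 1 and all natural numbers x and y, one has k! · C(x·y, k) = ∑_{l=1}^{k} ∑_{m=1}^{k} c^{(k)}_{l,m} · l! · m! · C(x,l) · C(y,m), where C(n,j) denotes the binomial coefficient. Equivalently, C(xy,k) = ∑_{l,m=1}^{k} b^{(k)}_{l,m} C(x,l) C(y,m) with b^{(k)}_{l,m} = l!·m!·c^{(k)}_{l,m}/k!. -/
import Mathlib


open Nat

/-- Unsigned Stirling numbers of the first kind: the number of permutations of
`n` elements with exactly `p` cycles. -/
def stirling1 : ℕ → ℕ → ℕ
  | 0, 0 => 1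
  | 0, _ + 1 => 0
  | _ + 1, 0 => 0
  | n + 1, p + 1 => n * stirling1 n (p + 1) + stirling1 n p

/-- Stirling numbers of the second kind: the number of partitions of an
`n`-element set into `p` nonempty blocks (`stirling2 p l = 0` when `p < l`). -/
def stirling2 : ℕ → ℕ → ℕ
  | 0, 0 => 1
  | 0, _ + 1 => 0
  | _ + 1, 0 => 0
  | n + 1, p + 1 => (p + 1) * stirling2 n (p + 1) + stirling2 n p

lemma stirling1_eq_zero_of_lt : ∀ {n p : ℕ}, n < p → stirling1 n p = 0
  | 0, _+1, _ => rfl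
  | n+1, p+1, h => by
    have h2 : n < p := Nat.lt_of_succ_lt_succ h
    simp [stirling1, stirling1_eq_zero_of_lt (h2.trans (Nat.lt_succ_self p)),
      stirling1_eq_zero_of_lt h2]

lemma stirling2_eq_zero_of_lt : ∀ {n p : ℕ}, n < p → stirling2 n p = 0
  | 0, _+1, _ => rfl
  | n+1, p+1, h => by
    have h2 : n < p := Nat.lt_of_succ_lt_succ h
    simp [stirling2, stirling2_eq_zero_of_lt (h2.trans (Nat.lt_succ_self p)),
      stirling2_eq_zero_of_lt h2]

lemma descFactorial_succ_int (x n : ℕ) :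
    (x.descFactorial (n+1) : ℤ) = ((x:ℤ) - n) * x.descFactorial n := by
  rcases le_or_gt n x with h | h
  · rw [Nat.descFactorial_succ]
    push_cast [h]
    ring
  · rw [Nat.descFactorial_eq_zero_iff_lt.2 h,
      Nat.descFactorial_eq_zero_iff_lt.2 (h.trans (Nat.lt_succ_self n))]
    simp

lemma pow_eq_sum_stirling2 (x : ℕ) : ∀ p : ℕ,
    (x:ℤ)^p = ∑ l ∈ Finset.range (p+1), (stirling2 p l : ℤ) * (x.descFactorial l : ℤ)
  | 0 => by simp [stirling2]
  | p+1 => by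
    have ih := pow_eq_sum_stirling2 x p
    have key : ∀ l : ℕ, (x:ℤ) * x.descFactorial l
        = (x.descFactorial (l+1) : ℤ) + l * x.descFactorial l := by
      intro l; rw [descFactorial_succ_int]; ring
    have h1 : (x:ℤ)^(p+1)
        = ∑ l ∈ Finset.range (p+1), (stirling2 p l : ℤ) * x.descFactorial (l+1)
          + ∑ l ∈ Finset.range (p+1), ((l:ℤ) * stirling2 p l) * x.descFactorial l := by
      rw [pow_succ, ih, Finset.sum_mul, ← Finset.sum_add_distrib]
      apply Finset.sum_congr rfl
      intro l _
      rw [mul_comm _ (x:ℤ), mul_left_comm, key]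
      ring
    have h2 : ∑ l ∈ Finset.range (p+1), ((l:ℤ) * stirling2 p l) * x.descFactorial l
        = ∑ l ∈ Finset.range (p+1), (((l:ℤ)+1) * stirling2 p (l+1)) * x.descFactorial (l+1) := by
      rw [Finset.sum_range_succ' _ p, Finset.sum_range_succ]
      simp only [stirling2_eq_zero_of_lt (Nat.lt_succ_self p), Nat.cast_zero, mul_zero,
        zero_mul, add_zero, pow_zero, Nat.cast_ofNat]
      apply Finset.sum_congr rfl
      intros; push_cast; ring
    rw [h1, h2, Finset.sum_range_succ' _ (p+1)]
    have h0 : stirling2 (p+1) 0 = 0 := rfl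
    rw [h0]
    simp only [Nat.cast_zero, zero_mul, add_zero]
    rw [← Finset.sum_add_distrib]
    apply Finset.sum_congr rfl
    intro l _
    show _ = (stirling2 (p+1) (l+1) : ℤ) * _
    have : stirling2 (p+1) (l+1) = (l+1) * stirling2 p (l+1) + stirling2 p l := rfl
    rw [this]; push_cast; ring

lemma descFactorial_eq_sum_stirling1 (x : ℕ) : ∀ n : ℕ,
    (x.descFactorial n : ℤ)
      = ∑ p ∈ Finset.range (n+1), (-1:ℤ)^(n-p) * stirling1 n p * (x:ℤ)^p
  | 0 => by simp [stirling1]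
  | n+1 => by
    have ih := descFactorial_eq_sum_stirling1 x n
    have hrec : ∀ p, stirling1 (n+1) (p+1) = n * stirling1 n (p+1) + stirling1 n p :=
      fun p => rfl
    have h0 : stirling1 (n+1) 0 = 0 := rfl
    have hs1 : (n:ℤ) * stirling1 n (n+1) = 0 := by
      rw [stirling1_eq_zero_of_lt (Nat.lt_succ_self n)]; ring
    have hs0 : (n:ℤ) * stirling1 n 0 = 0 := by
      cases n with
      | zero => simp
      | succ m => simp [show stirling1 (m+1) 0 = 0 from rfl]
    have hL : ∑ p ∈ Finset.range (n+1), (x:ℤ) * ((-1:ℤ)^(n-p) * stirling1 n p * (x:ℤ)^p)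
        = ∑ p ∈ Finset.range (n+1), (-1:ℤ)^(n-p) * stirling1 n p * (x:ℤ)^(p+1) := by
      apply Finset.sum_congr rfl; intros; ring
    have hR : ∑ p ∈ Finset.range (n+1), (n:ℤ) * ((-1:ℤ)^(n-p) * stirling1 n p * (x:ℤ)^p)
        = ∑ p ∈ Finset.range (n+1),
            -((-1:ℤ)^(n-p) * ((n:ℤ) * stirling1 n (p+1)) * (x:ℤ)^(p+1)) := by
      rw [Finset.sum_range_succ' _ n, Finset.sum_range_succ]
      have t1 : (n:ℤ) * ((-1:ℤ)^(n-0) * (stirling1 n 0 : ℤ) * (x:ℤ)^0) = 0 := by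
        rw [show (n:ℤ) * ((-1:ℤ)^(n-0) * (stirling1 n 0 : ℤ) * (x:ℤ)^0)
          = (-1:ℤ)^(n-0) * ((n:ℤ) * stirling1 n 0) * (x:ℤ)^0 from by ring, hs0]
        ring
      have t2 : -((-1:ℤ)^(n-n) * ((n:ℤ) * stirling1 n (n+1)) * (x:ℤ)^(n+1)) = 0 := by
        rw [hs1]; ring
      rw [t1, t2, add_zero, add_zero]
      apply Finset.sum_congr rfl
      intro p hp
      simp only [Finset.mem_range] at hp
      have hsub : n - p = (n - (p+1)) + 1 := by omega
      rw [hsub, pow_succ]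
      ring
    rw [descFactorial_succ_int, ih, Finset.sum_range_succ' _ (n+1), h0, sub_mul,
      Finset.mul_sum, Finset.mul_sum, hL, hR, ← Finset.sum_sub_distrib]
    simp only [Nat.cast_zero, zero_mul, mul_zero, add_zero]
    apply Finset.sum_congr rfl
    intro p _
    rw [hrec]
    have : n + 1 - (p + 1) = n - p := by omega
    rw [this]
    push_cast
    ring

lemma pow_eq_Icc (x k p : ℕ) (hp1 : 1 ≤ p) (hp2 : p ≤ k) :
    (x:ℤ)^p = ∑ l ∈ Finset.Icc 1 k, (stirling2 p l : ℤ) * ((l ! : ℤ) * (x.choose l : ℤ)) := by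
  have e1 : ∑ l ∈ Finset.range (p+1), (stirling2 p l : ℤ) * (x.descFactorial l : ℤ)
      = ∑ l ∈ Finset.range (k+1), (stirling2 p l : ℤ) * (x.descFactorial l : ℤ) := by
    apply Finset.sum_subset (Finset.range_subset_range.2 (Nat.succ_le_succ hp2))
    intro l hl hnl
    simp only [Finset.mem_range, not_lt] at hl hnl
    rw [stirling2_eq_zero_of_lt (by omega)]
    simp
  have e2 : ∑ l ∈ Finset.Icc 1 k, (stirling2 p l : ℤ) * (x.descFactorial l : ℤ)
      = ∑ l ∈ Finset.range (k+1), (stirling2 p l : ℤ) * (x.descFactorial l : ℤ) := by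
    apply Finset.sum_subset
    · intro l hl; simp only [Finset.mem_Icc] at hl; simp only [Finset.mem_range]; omega
    · intro l hl hnl
      simp only [Finset.mem_range] at hl
      simp only [Finset.mem_Icc, not_and, not_le] at hnl
      have hl0 : l = 0 := by omega
      subst hl0
      have hz : stirling2 p 0 = 0 := by
        cases p with
        | zero => omega
        | succ q => rfl
      rw [hz]; simp
  rw [pow_eq_sum_stirling2, e1, ← e2]
  apply Finset.sum_congr rfl
  intro l _
  rw [Nat.descFactorial_eq_factorial_mul_choose]
  push_cast; ring


/-- The coefficients `c^(k)_{l,m} = ∑_{p=1}^k (-1)^(k-p) s(k,p) S(p,l) S(p,m)`. -/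
def c (k l m : ℕ) : ℤ :=
  ∑ p ∈ Finset.Icc 1 k,
    (-1 : ℤ) ^ (k - p) * (stirling1 k p : ℤ) * (stirling2 p l : ℤ) * (stirling2 p m : ℤ)

/-- The binomial form of the expansion:
`k! C(xy,k) = ∑_{l,m=1}^k c^(k)_{l,m} l! m! C(x,l) C(y,m)`. -/
theorem binomial_product_expansion (k : ℕ) (hk : 1 ≤ k) (x y : ℕ) :
    ((k ! : ℤ) * ((x * y).choose k : ℤ)) =
      ∑ l ∈ Finset.Icc 1 k, ∑ m ∈ Finset.Icc 1 k,
        c k l m * (l ! : ℤ) * (m ! : ℤ) * (x.choose l : ℤ) * (y.choose m : ℤ) := by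
  have hdf : ((k ! : ℤ)) * ((x*y).choose k : ℤ) = (((x*y)).descFactorial k : ℤ) := by
    rw [Nat.descFactorial_eq_factorial_mul_choose]; push_cast; ring
  rw [hdf, descFactorial_eq_sum_stirling1]
  have hres : ∑ p ∈ Finset.range (k+1), (-1:ℤ)^(k-p) * stirling1 k p * ((x*y:ℕ):ℤ)^p
      = ∑ p ∈ Finset.Icc 1 k, (-1:ℤ)^(k-p) * stirling1 k p * ((x*y:ℕ):ℤ)^p := by
    symm
    apply Finset.sum_subset
    · intro p hp; simp only [Finset.mem_Icc] at hp; simp only [Finset.mem_range]; omega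
    · intro p hp hnp
      simp only [Finset.mem_range] at hp
      simp only [Finset.mem_Icc, not_and, not_le] at hnp
      have hp0 : p = 0 := by omega
      subst hp0
      have h1 : stirling1 k 0 = 0 := by
        cases k with
        | zero => omega
        | succ m => rfl
      rw [h1]; simp
  rw [hres]
  have step : ∀ p ∈ Finset.Icc 1 k,
      (-1:ℤ)^(k-p) * stirling1 k p * ((x*y:ℕ):ℤ)^p
        = ∑ l ∈ Finset.Icc 1 k, ∑ m ∈ Finset.Icc 1 k,
            (-1:ℤ)^(k-p) * (stirling1 k p : ℤ) * (stirling2 p l : ℤ) * (stirling2 p m : ℤ)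
              * (l ! : ℤ) * (m ! : ℤ) * (x.choose l : ℤ) * (y.choose m : ℤ) := by
    intro p hp
    simp only [Finset.mem_Icc] at hp
    have hxy : ((x*y:ℕ):ℤ)^p = (x:ℤ)^p * (y:ℤ)^p := by push_cast; ring
    rw [hxy, pow_eq_Icc x k p hp.1 hp.2, pow_eq_Icc y k p hp.1 hp.2,
      Finset.sum_mul_sum, Finset.mul_sum]
    apply Finset.sum_congr rfl; intro l _
    rw [Finset.mul_sum]
    apply Finset.sum_congr rfl; intro m _
    ring
  rw [Finset.sum_congr rfl step, Finset.sum_comm]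
  apply Finset.sum_congr rfl
  intro l _
  rw [Finset.sum_comm]
  apply Finset.sum_congr rfl
  intro m _
  simp only [c, Finset.sum_mul]
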